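/- arXiv:2104.03124 — 2 statements merged into one kernel-verified Lean document; each statement's English description precedes it below -/
import Mathlib

section
/- Let $(\phi_k)_{k=1}^n$ be functions in $L^2(0,1)$ that are pairwise orthogonal. Then $\left\|\max_{1\le m\le n}\left|\sum_{k=1}^m \phi_k\right|\right\|_{L^2} \le c \log(n+1) \left\|\sum_{k=1}^n \phi_k\right\|_{L^2}$ for some absolute constant $c>0$. -/
/-!
Split a partial sum `S m = ∑_{k ≤ m} φ k` along the binary expansion of `m`: it is a sum of at
most one dyadic block `B j a = ∑_{a 2^j < k ≤ (a+1) 2^j} φ k` from each of the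
`K = ⌈log₂ (n + 1)⌉` levels `j`, so by Cauchy–Schwarz `|S m|² ≤ K ∑_j ∑_a |B j a|²` uniformly
in `m ≤ n`. The blocks of one level partition `{1, …, n}`, so by orthogonality
`∑_a ‖B j a‖² = ‖S n‖²` for every `j`, and integrating gives `‖max_m |S m|‖² ≤ K² ‖S n‖²`.
-/

open MeasureTheory Finset

def dyadicBlock (n j a : ℕ) : Finset ℕ := Ioc (a * 2 ^ j) (min ((a + 1) * 2 ^ j) n)

def dyadicFloor (j m : ℕ) : ℕ := m / 2 ^ j * 2 ^ j

lemma dyadicBlock_subset (n j a : ℕ) : dyadicBlock n j a ⊆ Ioc 0 n := by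
  intro k hk
  simp only [dyadicBlock, mem_Ioc] at hk ⊢
  omega

lemma sum_sum_dyadicBlock {M : Type*} [AddCommMonoid M] (c : ℕ → M) (n j : ℕ) :
    ∑ a ∈ range n, ∑ k ∈ dyadicBlock n j a, c k = ∑ k ∈ Ioc 0 n, c k := by
  have hpos : 0 < 2 ^ j := Nat.two_pow_pos j
  have hfiber : ∀ a, dyadicBlock n j a = {k ∈ Ioc 0 n | (k - 1) / 2 ^ j = a} := by
    intro a
    ext k
    simp only [dyadicBlock, mem_Ioc, mem_filter, Nat.div_eq_iff hpos, add_mul, one_mul]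
    omega
  simp_rw [hfiber]
  refine sum_fiberwise_of_maps_to (fun k hk => ?_) c
  rw [mem_Ioc] at hk
  exact mem_range.2 ((Nat.div_le_self _ _).trans_lt (by omega))

lemma dyadicFloor_zero (m : ℕ) : dyadicFloor 0 m = m := by
  simp [dyadicFloor]

lemma dyadicFloor_eq_zero {j m : ℕ} (h : m < 2 ^ j) : dyadicFloor j m = 0 := by
  simp [dyadicFloor, Nat.div_eq_of_lt h]

lemma dyadicFloor_succ (j m : ℕ) : dyadicFloor (j + 1) m = m / 2 ^ j / 2 * 2 * 2 ^ j := by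
  rw [dyadicFloor, pow_succ, Nat.div_div_eq_div_mul]
  ring

lemma dyadicFloor_succ_le (j m : ℕ) : dyadicFloor (j + 1) m ≤ dyadicFloor j m := by
  rw [dyadicFloor_succ, dyadicFloor]
  exact Nat.mul_le_mul_right _ (Nat.div_mul_le_self _ 2)

lemma sum_Ioc_zero_eq_sum_dyadicFloor {M : Type*} [AddCommGroup M] (c : ℕ → M) {m K : ℕ}
    (hm : m < 2 ^ K) :
    ∑ k ∈ Ioc 0 m, c k =
      ∑ j ∈ range K, ∑ k ∈ Ioc (dyadicFloor (j + 1) m) (dyadicFloor j m), c k := by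
  have hstep : ∀ j, ∑ k ∈ Ioc (dyadicFloor (j + 1) m) (dyadicFloor j m), c k =
      ∑ k ∈ Ioc 0 (dyadicFloor j m), c k - ∑ k ∈ Ioc 0 (dyadicFloor (j + 1) m), c k :=
    fun j => eq_sub_of_add_eq' (sum_Ioc_consecutive c (Nat.zero_le _) (dyadicFloor_succ_le j m))
  simp_rw [hstep]
  rw [sum_range_sub' (fun j => ∑ k ∈ Ioc 0 (dyadicFloor j m), c k), dyadicFloor_zero,
    dyadicFloor_eq_zero hm, Ioc_self, sum_empty, sub_zero]

-- Consecutive dyadic floors of `m` differ by nothing or by one dyadic block, according to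
-- bit `j` of `m`.
lemma sq_sum_Ioc_dyadicFloor_le (c : ℕ → ℝ) {m n : ℕ} (hm : m ≤ n) (j : ℕ) :
    (∑ k ∈ Ioc (dyadicFloor (j + 1) m) (dyadicFloor j m), c k) ^ 2 ≤
      ∑ a ∈ range n, (∑ k ∈ dyadicBlock n j a, c k) ^ 2 := by
  rw [dyadicFloor_succ, dyadicFloor]
  obtain ⟨a, hbit | hbit⟩ := Nat.even_or_odd' (m / 2 ^ j)
  · rw [hbit, Nat.mul_div_cancel_left a two_pos, mul_comm a 2, Ioc_self, sum_empty, sq, zero_mul]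
    exact sum_nonneg fun a _ => sq_nonneg _
  · have hle : (2 * a + 1) * 2 ^ j ≤ n := hbit ▸ (Nat.div_mul_le_self m _).trans hm
    have hblock : Ioc (2 * a * 2 ^ j) ((2 * a + 1) * 2 ^ j) = dyadicBlock n j (2 * a) := by
      rw [dyadicBlock, min_eq_left hle]
    have ha : 2 * a < n := by
      have := Nat.two_pow_pos j
      nlinarith
    rw [hbit, show (2 * a + 1) / 2 = a by omega, mul_comm a 2, hblock]
    exact single_le_sum (f := fun a => (∑ k ∈ dyadicBlock n j a, c k) ^ 2)
      (fun _ _ => sq_nonneg _) (mem_range.2 ha)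

lemma sq_sum_Ioc_le_card_mul_sum_dyadicBlock (c : ℕ → ℝ) {m n K : ℕ} (hm : m ≤ n)
    (hn : n < 2 ^ K) :
    (∑ k ∈ Ioc 0 m, c k) ^ 2 ≤
      K * ∑ j ∈ range K, ∑ a ∈ range n, (∑ k ∈ dyadicBlock n j a, c k) ^ 2 := by
  rw [sum_Ioc_zero_eq_sum_dyadicFloor c (hm.trans_lt hn)]
  calc _ ≤ K * ∑ j ∈ range K,
        (∑ k ∈ Ioc (dyadicFloor (j + 1) m) (dyadicFloor j m), c k) ^ 2 := by
        simpa using sq_sum_le_card_mul_sum_sq (s := range K)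
          (f := fun j => ∑ k ∈ Ioc (dyadicFloor (j + 1) m) (dyadicFloor j m), c k)
    _ ≤ _ := by gcongr with j; exact sq_sum_Ioc_dyadicFloor_le c hm j


section L2
variable {α : Type*} [MeasurableSpace α] {μ : Measure α}

lemma integral_sq_sum_of_orthogonal {ι : Type*} (φ : ι → α → ℝ) (s : Finset ι)
    (hmem : ∀ k ∈ s, MemLp (φ k) 2 μ)
    (horth : ∀ j ∈ s, ∀ k ∈ s, j ≠ k → ∫ x, φ j x * φ k x ∂μ = 0) :
    ∫ x, (∑ k ∈ s, φ k x) ^ 2 ∂μ = ∑ k ∈ s, ∫ x, φ k x ^ 2 ∂μ := by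
  have hint : ∀ j ∈ s, ∀ k ∈ s, Integrable (fun x => φ j x * φ k x) μ :=
    fun j hj k hk => (hmem j hj).integrable_mul (hmem k hk)
  simp_rw [sq, sum_mul_sum]
  rw [integral_finsetSum s fun j hj => integrable_finsetSum s (hint j hj)]
  refine sum_congr rfl fun j hj => ?_
  rw [integral_finsetSum s (hint j hj),
    sum_eq_single_of_mem j hj fun k hk hkj => horth j hj k hk hkj.symm]

lemma MeasureTheory.MemLp.eLpNorm_two_eq_ofReal_sqrt_integral {f : α → ℝ} (hf : MemLp f 2 μ) :
    eLpNorm f 2 μ = ENNReal.ofReal √(∫ x, f x ^ 2 ∂μ) := by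
  rw [hf.eLpNorm_eq_integral_rpow_norm two_ne_zero ENNReal.ofNat_ne_top, Real.sqrt_eq_rpow]
  norm_num [Real.norm_eq_abs]

lemma eLpNorm_two_le_ofReal_sqrt_integral {f g : α → ℝ} (hg : Integrable g μ)
    (hfg : ∀ x, f x ^ 2 ≤ g x) :
    eLpNorm f 2 μ ≤ ENNReal.ofReal √(∫ x, g x ∂μ) := by
  have hg0 : ∀ x, 0 ≤ g x := fun x => (sq_nonneg _).trans (hfg x)
  have hsqrt : MemLp (fun x => √(g x)) 2 μ := by
    refine (memLp_two_iff_integrable_sq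
      (Real.continuous_sqrt.comp_aestronglyMeasurable hg.1)).2 ?_
    simpa [Real.sq_sqrt (hg0 _)] using hg
  calc eLpNorm f 2 μ ≤ eLpNorm (fun x => √(g x)) 2 μ :=
        eLpNorm_mono fun x => by
          rw [Real.norm_eq_abs, Real.norm_eq_abs, abs_of_nonneg (Real.sqrt_nonneg _)]
          exact Real.abs_le_sqrt (hfg x)
    _ = _ := by simp_rw [hsqrt.eLpNorm_two_eq_ofReal_sqrt_integral, Real.sq_sqrt (hg0 _)]

end L2

lemma Nat.clog_two_le_three_mul_log (n : ℕ) :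
    (Nat.clog 2 (n + 1) : ℝ) ≤ 3 * Real.log (n + 1) := by
  rcases Nat.eq_zero_or_pos n with rfl | hn
  · simp
  set K := Nat.clog 2 (n + 1)
  have hK : 1 ≤ K := Nat.clog_pos one_lt_two (by omega)
  have hpow : ((2 : ℝ) ^ (K - 1)) < n + 1 := by
    exact_mod_cast Nat.pow_pred_clog_lt_self one_lt_two (by omega : 1 < n + 1)
  have hlogpow : ((K : ℝ) - 1) * Real.log 2 < Real.log (n + 1) := by
    have := Real.log_lt_log (by positivity) hpow
    rwa [Real.log_pow, Nat.cast_sub hK, Nat.cast_one] at this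
  have hn1 : (1 : ℝ) ≤ n := by exact_mod_cast hn
  have hlog2 : Real.log 2 ≤ Real.log (n + 1) := Real.log_le_log two_pos (by linarith)
  have := Real.log_two_gt_d9
  nlinarith

lemma sq_biSup_abs_le {ι : Type*} {s : Finset ι} {f : ι → ℝ} {b : ℝ} (hb : 0 ≤ b)
    (h : ∀ i ∈ s, f i ^ 2 ≤ b) :
    (⨆ i ∈ s, |f i|) ^ 2 ≤ b := by
  have hsup : ⨆ i ∈ s, |f i| ≤ √b :=
    Real.iSup_le (fun i => Real.iSup_le (fun hi => Real.abs_le_sqrt (h i hi)) (Real.sqrt_nonneg b))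
      (Real.sqrt_nonneg b)
  have hsup_nonneg : 0 ≤ ⨆ i ∈ s, |f i| :=
    Real.iSup_nonneg fun i => Real.iSup_nonneg fun _ => abs_nonneg _
  exact (Real.le_sqrt hsup_nonneg hb).1 hsup

theorem eLpNorm_iSup_abs_partialSum_le_clog_mul {α : Type*} [MeasurableSpace α] (μ : Measure α)
    (n : ℕ) (φ : ℕ → α → ℝ) (hmem : ∀ k ∈ Icc 1 n, MemLp (φ k) 2 μ)
    (horth : ∀ j ∈ Icc 1 n, ∀ k ∈ Icc 1 n, j ≠ k → ∫ x, φ j x * φ k x ∂μ = 0) :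
    eLpNorm (fun x => ⨆ m ∈ Icc 1 n, |∑ k ∈ Icc 1 m, φ k x|) 2 μ ≤
      Nat.clog 2 (n + 1) * eLpNorm (fun x => ∑ k ∈ Icc 1 n, φ k x) 2 μ := by
  have hIcc : ∀ r, Icc 1 r = Ioc 0 r := fun r => Icc_succ_left_eq_Ioc 0 r
  simp only [hIcc] at hmem horth ⊢
  set K := Nat.clog 2 (n + 1)
  have hK : n < 2 ^ K := Nat.le_pow_clog one_lt_two (n + 1)
  have hpyth : ∀ s ⊆ Ioc 0 n, ∫ x, (∑ k ∈ s, φ k x) ^ 2 ∂μ = ∑ k ∈ s, ∫ x, φ k x ^ 2 ∂μ :=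
    fun s hs => integral_sq_sum_of_orthogonal φ s (fun k hk => hmem k (hs hk))
      fun j hj k hk => horth j (hs hj) k (hs hk)
  have hSn : MemLp (fun x => ∑ k ∈ Ioc 0 n, φ k x) 2 μ := memLp_finsetSum _ hmem
  have hblock : ∀ j a, MemLp (fun x => ∑ k ∈ dyadicBlock n j a, φ k x) 2 μ :=
    fun j a => memLp_finsetSum _ fun k hk => hmem k (dyadicBlock_subset n j a hk)
  have hlevel : ∀ j,
      Integrable (fun x => ∑ a ∈ range n, (∑ k ∈ dyadicBlock n j a, φ k x) ^ 2) μ :=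
    fun j => integrable_finsetSum _ fun a _ => (hblock j a).integrable_sq
  have hlevel_integral : ∀ j, ∫ x, ∑ a ∈ range n, (∑ k ∈ dyadicBlock n j a, φ k x) ^ 2 ∂μ =
      ∫ x, (∑ k ∈ Ioc 0 n, φ k x) ^ 2 ∂μ := fun j => by
    rw [integral_finsetSum _ fun a _ => (hblock j a).integrable_sq,
      sum_congr rfl fun a _ => hpyth _ (dyadicBlock_subset n j a),
      sum_sum_dyadicBlock, hpyth _ subset_rfl]
  set G := fun x =>
    (K : ℝ) * ∑ j ∈ range K, ∑ a ∈ range n, (∑ k ∈ dyadicBlock n j a, φ k x) ^ 2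
  have hG : Integrable G μ := (integrable_finsetSum _ fun j _ => hlevel j).const_mul _
  have hG_integral : ∫ x, G x ∂μ = (K : ℝ) ^ 2 * ∫ x, (∑ k ∈ Ioc 0 n, φ k x) ^ 2 ∂μ := by
    simp only [G, integral_const_mul, integral_finsetSum _ fun j _ => hlevel j, hlevel_integral,
      sum_const, card_range, nsmul_eq_mul]
    ring
  have hmax : ∀ x, (⨆ m ∈ Ioc 0 n, |∑ k ∈ Ioc 0 m, φ k x|) ^ 2 ≤ G x := fun x =>
    sq_biSup_abs_le (by positivity) fun m hm =>
      sq_sum_Ioc_le_card_mul_sum_dyadicBlock (φ · x) (mem_Ioc.1 hm).2 hK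
  calc _ ≤ ENNReal.ofReal √(∫ x, G x ∂μ) := eLpNorm_two_le_ofReal_sqrt_integral hG hmax
    _ = _ := by
      rw [hG_integral, Real.sqrt_mul (by positivity), Real.sqrt_sq (by positivity),
        ENNReal.ofReal_mul (by positivity), ENNReal.ofReal_natCast,
        hSn.eLpNorm_two_eq_ofReal_sqrt_integral]

/-- Menshov–Rademacher inequality. -/
theorem stmt0 :
    ∃ C : ℝ, 0 < C ∧
      ∀ (n : ℕ) (φ : ℕ → ℝ → ℝ),
        (∀ k ∈ Finset.Icc 1 n, MemLp (φ k) 2 (volume.restrict (Set.Ioo (0:ℝ) 1))) →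
        (∀ j ∈ Finset.Icc 1 n, ∀ k ∈ Finset.Icc 1 n, j ≠ k →
          ∫ x in Set.Ioo (0:ℝ) 1, φ j x * φ k x = 0) →
        eLpNorm (fun x => ⨆ m ∈ Finset.Icc 1 n, |∑ k ∈ Finset.Icc 1 m, φ k x|) 2
            (volume.restrict (Set.Ioo (0:ℝ) 1)) ≤
          ENNReal.ofReal (C * Real.log (n + 1)) *
            eLpNorm (fun x => ∑ k ∈ Finset.Icc 1 n, φ k x) 2
              (volume.restrict (Set.Ioo (0:ℝ) 1)) := by
  refine ⟨3, by norm_num, fun n φ hmem horth => ?_⟩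
  refine (eLpNorm_iSup_abs_partialSum_le_clog_mul _ n φ hmem horth).trans ?_
  gcongr
  rw [← ENNReal.ofReal_natCast]
  exact ENNReal.ofReal_le_ofReal (Nat.clog_two_le_three_mul_log n)
end

section
/- Let $0<\delta<1$ and suppose $(\phi_k)$ is a wavelet-type system: an orthonormal system on $[0,1]$ with $\int_0^1 \phi_k = 0$ and $|\phi_k(x)| \le c\,2^{m/2}(1+2^m|x-t_k|)^{-(1+\delta)}$ for $2^{m-1}<k\le 2^m$. For an interval $I=[a,b)\subset[0,1)$, let $\Delta\Phi_m(\mathbf{1}_I)(x) = \sum_{2^{m-1}<k\le 2^m} \langle \mathbf{1}_I, \phi_k\rangle\, \phi_k(x)$. Then for all $x \in [0,1)$, $|\Delta\Phi_m(\mathbf{1}_I)(x)| \le C\left( (1+2^m|x-a|)^{-\delta} + (1+2^m|x-b|)^{-\delta} \right)$, with $C$ depending only on $c$ and $\delta$. -/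
open MeasureTheory Set

noncomputable section

/-- The decay profile `ξ(x) = (1+|x|)^{-(1+δ)}`. -/
def xi (δ x : ℝ) : ℝ := (1 + |x|) ^ (-(1 + δ))

/-- The center `t_k = (2j-1)/2^m` for `k = 2^{m-1} + j`, `1 ≤ j ≤ 2^{m-1}`. -/
def tpt (m k : ℕ) : ℝ := (2 * ((k : ℝ) - 2 ^ (m - 1)) - 1) / 2 ^ m

/-- Decay bound of a wavelet-type system: for `2^{m-1} < k ≤ 2^m`,
`|φ_k(x)| ≤ c 2^{m/2} ξ(2^m (x - t_k))`. -/
def WaveletDecay (δ c : ℝ) (φ : ℕ → ℝ → ℝ) : Prop :=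
  ∀ m : ℕ, 1 ≤ m → ∀ k ∈ Finset.Ioc (2 ^ (m - 1)) (2 ^ m), ∀ x ∈ Set.Icc (0:ℝ) 1,
    |φ k x| ≤ c * 2 ^ ((m : ℝ) / 2) * xi δ (2 ^ m * (x - tpt m k))

/-- Hölder bound of a wavelet-type system: for `2^{m-1} < k ≤ 2^m` and
`|t - t'| ≤ 2^{-m}`, `|φ_k(t) - φ_k(t')| ≤ c 2^{m/2} (2^m |t-t'|)^α ξ(2^m (t - t_k))`. -/
def WaveletHolder (δ α c : ℝ) (φ : ℕ → ℝ → ℝ) : Prop :=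
  ∀ m : ℕ, 1 ≤ m → ∀ k ∈ Finset.Ioc (2 ^ (m - 1)) (2 ^ m),
    ∀ t ∈ Set.Icc (0:ℝ) 1, ∀ t' ∈ Set.Icc (0:ℝ) 1, |t - t'| ≤ ((2 : ℝ) ^ m)⁻¹ →
      |φ k t - φ k t'| ≤
        c * 2 ^ ((m : ℝ) / 2) * (2 ^ m * |t - t'|) ^ α * xi δ (2 ^ m * (t - tpt m k))

/-- A wavelet-type system: measurable, orthonormal on `(0,1)`, mean zero, with the
decay and Hölder bounds. -/
def IsWaveletSystem (δ α c : ℝ) (φ : ℕ → ℝ → ℝ) : Prop :=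
  (∀ k, Measurable (φ k)) ∧
  (∀ j k : ℕ, 1 ≤ j → 1 ≤ k →
    (∫ x in Set.Ioo (0:ℝ) 1, φ j x * φ k x) = if j = k then 1 else 0) ∧
  (∀ k : ℕ, 1 ≤ k → (∫ x in Set.Ioo (0:ℝ) 1, φ k x) = 0) ∧
  WaveletDecay δ c φ ∧ WaveletHolder δ α c φ

/-!
A coefficient `⟨1_I, φ_k⟩` is bounded by integrating the decay bound of `φ_k`: over a tail beyond
`a` or `b` when the centre `t_k` lies outside `I`, and, since `φ_k` has mean zero, over the
complement of `I` when `t_k` lies inside. As `∫_s^∞ (1 + t)^{-(1+δ)} dt = (1 + s)^{-δ} / δ`, the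
bound is `2^{-m/2} c δ⁻¹ ((1 + 2^m|a - t_k|)^{-δ} + (1 + 2^m|b - t_k|)^{-δ})`. A Peetre-type
inequality `ξ(z) (1 + |w|)^{-δ} ≤ 2^δ (1 + |z - w|)^{-δ} (ξ(z) + ξ(w))` moves the decay in
`|x - a|`, `|x - b|` out of the sum over `k`, and what remains are sums of `ξ` over the grid of
centres, which are dominated by `∫ ξ = 2 / δ`.
-/
def xiTail (δ x : ℝ) : ℝ := (1 + |x|) ^ (-δ)

theorem xi_nonneg (δ x : ℝ) : 0 ≤ xi δ x := by unfold xi; positivity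

theorem xiTail_nonneg (δ x : ℝ) : 0 ≤ xiTail δ x := by unfold xiTail; positivity

theorem xi_neg (δ x : ℝ) : xi δ (-x) = xi δ x := by simp [xi]

theorem xiTail_neg (δ x : ℝ) : xiTail δ (-x) = xiTail δ x := by simp [xiTail]

theorem integrable_xi {δ : ℝ} (hδ : 0 < δ) : Integrable (xi δ) :=
  integrable_one_add_norm (E := ℝ) (by simpa using hδ)

theorem integrable_xi_comp {δ : ℝ} (hδ : 0 < δ) {p : ℝ} (hp : p ≠ 0) (T : ℝ) :
    Integrable fun t => xi δ (p * (t - T)) :=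
  ((integrable_xi hδ).comp_mul_left' hp).comp_sub_right (μ := volume) T

theorem setIntegral_Ioi_xi {δ p T a : ℝ} (hδ : 0 < δ) (hp : 0 < p) (hTa : T ≤ a) :
    ∫ t in Ioi a, xi δ (p * (t - T)) = xiTail δ (p * (a - T)) / (δ * p) := by
  set g : ℝ → ℝ := fun t => -(1 + p * (t - T)) ^ (-δ) / (δ * p)
  have hpos : ∀ t ∈ Ici a, 0 < 1 + p * (t - T) := fun t ht => by
    nlinarith [mem_Ici.1 ht]
  have hderiv : ∀ t ∈ Ici a, HasDerivAt g ((1 + p * (t - T)) ^ (-(1 + δ))) t := by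
    intro t ht
    have hlin : HasDerivAt (fun s => 1 + p * (s - T)) p t := by
      simpa using (((hasDerivAt_id t).sub_const T).const_mul p).const_add 1
    refine (((hlin.rpow_const (p := -δ) (Or.inl (hpos t ht).ne')).neg).div_const
      (δ * p)).congr_deriv ?_
    rw [show -δ - 1 = -(1 + δ) by ring]
    field_simp
  have hlim : Filter.Tendsto g Filter.atTop (nhds 0) := by
    have hlin : Filter.Tendsto (fun s => 1 + p * (s - T)) Filter.atTop Filter.atTop :=
      Filter.tendsto_atTop_add_const_left _ _
        ((Filter.tendsto_atTop_add_const_right _ _ Filter.tendsto_id).const_mul_atTop hp)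
    simpa [g] using (((tendsto_rpow_neg_atTop hδ).comp hlin).neg).div_const (δ * p)
  have hxi : EqOn (fun t => xi δ (p * (t - T))) (fun t => (1 + p * (t - T)) ^ (-(1 + δ)))
      (Ioi a) := fun t ht => by
    simp only [xi, abs_of_nonneg (by nlinarith [mem_Ioi.1 ht] : 0 ≤ p * (t - T))]
  rw [setIntegral_congr_fun measurableSet_Ioi hxi,
    integral_Ioi_of_hasDerivAt_of_nonneg' hderiv
      (fun t ht => (Real.rpow_pos_of_pos (hpos t (Ioi_subset_Ici_self ht)) _).le) hlim,
    xiTail, abs_of_nonneg (by nlinarith : 0 ≤ p * (a - T))]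
  simp only [g]
  ring

theorem setIntegral_Iic_xi {δ p T b : ℝ} (hδ : 0 < δ) (hp : 0 < p) (hbT : b ≤ T) :
    ∫ t in Iic b, xi δ (p * (t - T)) = xiTail δ (p * (b - T)) / (δ * p) := by
  have hflip : ∀ t, xi δ (p * (t - T)) = xi δ (p * (-t - -T)) := fun t => by
    rw [← xi_neg]; ring_nf
  simp_rw [hflip]
  rw [integral_comp_neg_Iic b (fun s => xi δ (p * (s - -T))),
    setIntegral_Ioi_xi hδ hp (neg_le_neg hbT), ← xiTail_neg]
  ring_nf

theorem integral_xi_comp {δ p : ℝ} (hδ : 0 < δ) (hp : 0 < p) (T : ℝ) :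
    ∫ t, xi δ (p * (t - T)) = 2 / (δ * p) := by
  have hint {s : Set ℝ} : IntegrableOn (fun t => xi δ (p * (t - T))) s :=
    (integrable_xi_comp hδ hp.ne' T).integrableOn
  rw [← intervalIntegral.integral_Iic_add_Ioi hint hint, setIntegral_Iic_xi hδ hp le_rfl,
    setIntegral_Ioi_xi hδ hp le_rfl]
  simp only [xiTail, sub_self, mul_zero, abs_zero, add_zero, Real.one_rpow]
  ring

theorem abs_setIntegral_Ioo_le_of_decay {δ p T M : ℝ} {f : ℝ → ℝ} (hδ : 0 < δ) (hp : 0 < p)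
    (hM : 0 ≤ M) (hf : Measurable f) (hbd : ∀ t ∈ Icc (0 : ℝ) 1, |f t| ≤ M * xi δ (p * (t - T)))
    (hmean : ∫ t in Ioo (0 : ℝ) 1, f t = 0) {a b : ℝ} (ha : 0 ≤ a) (hb : b ≤ 1) :
    |∫ t in Ioo a b, f t| ≤ M / (δ * p) * (xiTail δ (p * (a - T)) + xiTail δ (p * (b - T))) := by
  set B : ℝ → ℝ := fun t => M * xi δ (p * (t - T))
  have hB : Integrable B := (integrable_xi_comp hδ hp.ne' T).const_mul M
  have hB0 : ∀ t, 0 ≤ B t := fun t => mul_nonneg hM (xi_nonneg _ _)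
  have hdom : ∀ s ⊆ Icc (0 : ℝ) 1, ∀ s', MeasurableSet s → s ⊆ s' →
      |∫ t in s, f t| ≤ ∫ t in s', B t := fun s hs s' hms hss' =>
    (norm_integral_le_of_norm_le (f := f) hB.integrableOn
      (ae_restrict_of_forall_mem hms fun t ht => hbd t (hs ht))).trans
      (setIntegral_mono_set hB.integrableOn (ae_of_all _ hB0) hss'.eventuallyLE)
  have hIoi : ∀ a', T ≤ a' → ∫ t in Ioi a', B t = M / (δ * p) * xiTail δ (p * (a' - T)) :=
    fun a' h => by rw [integral_const_mul, setIntegral_Ioi_xi hδ hp h]; ring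
  have hIic : ∀ b', b' ≤ T → ∫ t in Iic b', B t = M / (δ * p) * xiTail δ (p * (b' - T)) :=
    fun b' h => by rw [integral_const_mul, setIntegral_Iic_xi hδ hp h]; ring
  have hsub : Ioo a b ⊆ Icc 0 1 := Ioo_subset_Icc_self.trans (Icc_subset_Icc ha hb)
  rcases le_or_gt T a with hTa | haT
  · calc |∫ t in Ioo a b, f t| ≤ ∫ t in Ioi a, B t :=
          hdom _ hsub _ measurableSet_Ioo Ioo_subset_Ioi_self
      _ ≤ _ := by
          rw [hIoi a hTa]
          gcongr
          exact le_add_of_nonneg_right (xiTail_nonneg _ _)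
  rcases le_or_gt b T with hbT | hTb
  · calc |∫ t in Ioo a b, f t| ≤ ∫ t in Iic b, B t :=
          hdom _ hsub _ measurableSet_Ioo (Ioo_subset_Iio_self.trans Iio_subset_Iic_self)
      _ ≤ _ := by
          rw [hIic b hbT]
          gcongr
          exact le_add_of_nonneg_left (xiTail_nonneg _ _)
  -- the centre lies in `(a, b)`: use the vanishing mean to integrate over the complement instead
  have hf01 : IntegrableOn f (Ioo 0 1) :=
    hB.integrableOn.mono' hf.aestronglyMeasurable.restrict
      (ae_restrict_of_forall_mem measurableSet_Ioo fun t ht => hbd t (Ioo_subset_Icc_self ht))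
  have hcompl : ∫ t in Ioo a b, f t = -∫ t in Ioo 0 1 \ Ioo a b, f t := by
    rw [setIntegral_sdiff measurableSet_Ioo hf01 (Ioo_subset_Ioo ha hb), hmean]
    ring
  have hcover : Ioo 0 1 \ Ioo a b ⊆ Iic a ∪ Ici b := fun t ht => by
    rcases le_or_gt t a with h | h
    · exact Or.inl h
    · exact Or.inr (le_of_not_gt fun h' => ht.2 ⟨h, h'⟩)
  calc |∫ t in Ioo a b, f t| = |∫ t in Ioo 0 1 \ Ioo a b, f t| := by rw [hcompl, abs_neg]
    _ ≤ ∫ t in Iic a ∪ Ici b, B t :=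
        hdom _ (sdiff_subset.trans Ioo_subset_Icc_self) _ (measurableSet_Ioo.diff measurableSet_Ioo)
          hcover
    _ = (∫ t in Iic a, B t) + ∫ t in Ici b, B t :=
        setIntegral_union (Iic_disjoint_Ici.2 (haT.trans hTb).not_ge) measurableSet_Ici
          hB.integrableOn hB.integrableOn
    _ = _ := by rw [integral_Ici_eq_integral_Ioi, hIic a haT.le, hIoi b hTb.le]; ring

theorem rpow_neg_le_two_rpow_mul {E Y s : ℝ} (hE : 0 < E) (hs : 0 ≤ s) (hEY : E ≤ 2 * Y) :
    Y ^ (-s) ≤ 2 ^ s * E ^ (-s) := by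
  calc Y ^ (-s) ≤ (E / 2) ^ (-s) :=
        Real.rpow_le_rpow_of_nonpos (half_pos hE) (by linarith) (neg_nonpos.2 hs)
    _ = 2 ^ s * E ^ (-s) := by
        rw [Real.div_rpow hE.le zero_le_two, Real.rpow_neg zero_le_two, div_inv_eq_mul, mul_comm]

theorem xi_eq_xiTail_mul_inv (δ z : ℝ) : xi δ z = xiTail δ z * (1 + |z|)⁻¹ := by
  rw [xi, xiTail, show -(1 + δ) = -δ + -1 by ring, Real.rpow_add (by positivity),
    Real.rpow_neg_one]

theorem xi_mul_xiTail_le {δ : ℝ} (hδ : 0 ≤ δ) (z w : ℝ) :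
    xi δ z * xiTail δ w ≤ 2 ^ δ * xiTail δ (z - w) * (xi δ z + xi δ w) := by
  have htri : 1 + |z - w| ≤ (1 + |z|) + (1 + |w|) := by linarith [abs_sub z w]
  have hE : 0 < 1 + |z - w| := by positivity
  have hK : 0 ≤ 2 ^ δ * xiTail δ (z - w) := by have := xiTail_nonneg δ (z - w); positivity
  rcases le_total |z| |w| with hzw | hwz
  · have hw : xiTail δ w ≤ 2 ^ δ * xiTail δ (z - w) :=
      rpow_neg_le_two_rpow_mul hE hδ (by linarith)
    calc xi δ z * xiTail δ w ≤ xi δ z * (2 ^ δ * xiTail δ (z - w)) :=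
          mul_le_mul_of_nonneg_left hw (xi_nonneg _ _)
      _ = 2 ^ δ * xiTail δ (z - w) * xi δ z := by ring
      _ ≤ _ := mul_le_mul_of_nonneg_left (le_add_of_nonneg_right (xi_nonneg _ _)) hK
  · have hz : xiTail δ z ≤ 2 ^ δ * xiTail δ (z - w) :=
      rpow_neg_le_two_rpow_mul hE hδ (by linarith)
    have hinv : (1 + |z|)⁻¹ ≤ (1 + |w|)⁻¹ := inv_anti₀ (by positivity) (by linarith)
    calc xi δ z * xiTail δ w = xiTail δ z * ((1 + |z|)⁻¹ * xiTail δ w) := by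
          rw [xi_eq_xiTail_mul_inv]; ring
      _ ≤ (2 ^ δ * xiTail δ (z - w)) * ((1 + |w|)⁻¹ * xiTail δ w) :=
          mul_le_mul hz (mul_le_mul_of_nonneg_right hinv (xiTail_nonneg _ _))
            (mul_nonneg (by positivity) (xiTail_nonneg _ _)) hK
      _ = 2 ^ δ * xiTail δ (z - w) * xi δ w := by rw [xi_eq_xiTail_mul_inv]; ring
      _ ≤ _ := mul_le_mul_of_nonneg_left (le_add_of_nonneg_left (xi_nonneg _ _)) hK

theorem xi_le_two_rpow_mul_xi {δ z w : ℝ} (hδ : 0 ≤ δ) (h : |z - w| ≤ 1) :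
    xi δ z ≤ 2 ^ (1 + δ) * xi δ w :=
  rpow_neg_le_two_rpow_mul (by positivity) (by linarith)
    (by linarith [abs_sub_abs_le_abs_sub w z, abs_sub_comm z w, abs_nonneg z])

theorem sum_xi_two_mul_sub_le {δ : ℝ} (hδ : 0 < δ) (θ : ℝ) (s : Finset ℕ) :
    ∑ k ∈ s, xi δ (2 * (k - θ)) ≤ 2 ^ (1 + δ) / δ := by
  set g : ℝ → ℝ := fun t => xi δ (2 * (t - θ))
  set I : ℕ → Set ℝ := fun k => Ioc ((k : ℝ) - 1 / 2) (k + 1 / 2)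
  have hg : Integrable g := integrable_xi_comp hδ two_ne_zero θ
  have hdisj : (s : Set ℕ).Pairwise (Function.onFun Disjoint I) := fun k _ l _ hkl => by
    simp only [Function.onFun, I, Ioc_disjoint_Ioc]
    rcases hkl.lt_or_gt with h | h
    · have : (k : ℝ) + 1 ≤ l := by exact_mod_cast h
      exact (min_le_left _ _).trans (by linarith [le_max_right ((k : ℝ) - 1 / 2) (l - 1 / 2)])
    · have : (l : ℝ) + 1 ≤ k := by exact_mod_cast h
      exact (min_le_right _ _).trans (by linarith [le_max_left ((k : ℝ) - 1 / 2) (l - 1 / 2)])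
  have hterm : ∀ k : ℕ, xi δ (2 * (k - θ)) ≤ 2 ^ (1 + δ) * ∫ t in I k, g t := fun k => by
    rw [← integral_const_mul]
    calc xi δ (2 * (k - θ)) = ∫ _ in I k, xi δ (2 * (k - θ)) := by norm_num [I]
      _ ≤ ∫ t in I k, 2 ^ (1 + δ) * g t :=
          setIntegral_mono_on (integrableOn_const (by simp [I])) (hg.integrableOn.const_mul _)
            measurableSet_Ioc fun t ht => xi_le_two_rpow_mul_xi hδ.le <| by
              rw [← mul_sub, abs_mul, abs_two, sub_sub_sub_cancel_right]
              linarith [abs_le.2 (⟨by linarith [ht.2], by linarith [ht.1]⟩ :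
                -(1 / 2) ≤ (k : ℝ) - t ∧ (k : ℝ) - t ≤ 1 / 2)]
  calc ∑ k ∈ s, xi δ (2 * (k - θ)) ≤ ∑ k ∈ s, 2 ^ (1 + δ) * ∫ t in I k, g t :=
        Finset.sum_le_sum fun k _ => hterm k
    _ = 2 ^ (1 + δ) * ∫ t in ⋃ k ∈ s, I k, g t := by
        rw [← Finset.mul_sum, integral_biUnion_finset s (fun _ _ => measurableSet_Ioc) hdisj
          fun _ _ => hg.integrableOn]
    _ ≤ 2 ^ (1 + δ) * ∫ t, g t := mul_le_mul_of_nonneg_left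
        (setIntegral_le_integral hg (ae_of_all _ fun t => xi_nonneg _ _)) (by positivity)
    _ = 2 ^ (1 + δ) / δ := by
        rw [integral_xi_comp hδ two_pos]
        field_simp

theorem sum_xi_tpt_le {δ : ℝ} (hδ : 0 < δ) (m : ℕ) (y : ℝ) :
    ∑ k ∈ Finset.Ioc (2 ^ (m - 1)) (2 ^ m), xi δ (2 ^ m * (y - tpt m k)) ≤ 2 ^ (1 + δ) / δ := by
  set θ : ℝ := (2 ^ m * y + 2 * 2 ^ (m - 1) + 1) / 2
  calc _ = ∑ k ∈ (Finset.Ioc (2 ^ (m - 1)) (2 ^ m) : Finset ℕ), xi δ (2 * (k - θ)) :=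
        Finset.sum_congr rfl fun k _ => by
          rw [← xi_neg]
          congr 1
          simp only [tpt, θ]
          field_simp
          ring
    _ ≤ _ := sum_xi_two_mul_sub_le hδ θ _

theorem WaveletDecay.abs_setIntegral_mul_le {δ c : ℝ} {φ : ℕ → ℝ → ℝ} (hδ : 0 < δ) (hc : 0 ≤ c)
    (hdecay : WaveletDecay δ c φ) {m k : ℕ} (hm : 1 ≤ m) (hk : k ∈ Finset.Ioc (2 ^ (m - 1)) (2 ^ m))
    (hmeas : Measurable (φ k)) (hmean : ∫ t in Ioo (0 : ℝ) 1, φ k t = 0) {a b x : ℝ} (ha : 0 ≤ a)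
    (hb : b ≤ 1) (hx : x ∈ Icc (0 : ℝ) 1) :
    |(∫ t in Ioo a b, φ k t) * φ k x| ≤ 2 ^ δ * c ^ 2 / δ *
      (xiTail δ (2 ^ m * (x - a)) * (xi δ (2 ^ m * (x - tpt m k)) + xi δ (2 ^ m * (a - tpt m k))) +
        xiTail δ (2 ^ m * (x - b)) * (xi δ (2 ^ m * (x - tpt m k)) + xi δ (2 ^ m * (b - tpt m k)))) := by
  set p : ℝ := 2 ^ m
  set T := tpt m k
  set M : ℝ := c * 2 ^ ((m : ℝ) / 2)
  have hp : 0 < p := by positivity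
  have hM : M * M = c ^ 2 * p := by
    rw [show M * M = c ^ 2 * (2 ^ ((m : ℝ) / 2) * 2 ^ ((m : ℝ) / 2)) by ring,
      ← Real.rpow_add two_pos, add_halves, Real.rpow_natCast]
  have hcoef := abs_setIntegral_Ioo_le_of_decay hδ hp (by positivity) hmeas (hdecay m hm k hk)
    hmean ha hb
  have hprod : ∀ y, xi δ (p * (x - T)) * xiTail δ (p * (y - T)) ≤
      2 ^ δ * xiTail δ (p * (x - y)) * (xi δ (p * (x - T)) + xi δ (p * (y - T))) := fun y => by
    simpa only [← mul_sub, sub_sub_sub_cancel_right] using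
      xi_mul_xiTail_le hδ.le (p * (x - T)) (p * (y - T))
  calc |(∫ t in Ioo a b, φ k t) * φ k x|
      ≤ M / (δ * p) * (xiTail δ (p * (a - T)) + xiTail δ (p * (b - T))) *
          (M * xi δ (p * (x - T))) := by
        rw [abs_mul]
        exact mul_le_mul hcoef (hdecay m hm k hk x hx) (abs_nonneg _)
          (add_nonneg (xiTail_nonneg _ _) (xiTail_nonneg _ _) |> mul_nonneg (by positivity))
    _ = c ^ 2 / δ * (xi δ (p * (x - T)) * xiTail δ (p * (a - T)) +
          xi δ (p * (x - T)) * xiTail δ (p * (b - T))) := by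
        rw [div_mul_eq_mul_div, div_mul_eq_mul_div, mul_mul_mul_comm, mul_comm _ M, hM]
        field_simp
    _ ≤ c ^ 2 / δ * (2 ^ δ * xiTail δ (p * (x - a)) * (xi δ (p * (x - T)) + xi δ (p * (a - T))) +
          2 ^ δ * xiTail δ (p * (x - b)) * (xi δ (p * (x - T)) + xi δ (p * (b - T)))) :=
        mul_le_mul_of_nonneg_left (add_le_add (hprod a) (hprod b)) (by positivity)
    _ = _ := by ring

theorem stmt6_general (δ c : ℝ) (hδ0 : 0 < δ) (hc : 0 < c) :
    ∃ C : ℝ, 0 < C ∧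
      ∀ α : ℝ, 0 < α → α ≤ 1 →
        ∀ φ : ℕ → ℝ → ℝ, IsWaveletSystem δ α c φ →
          ∀ m : ℕ, 1 ≤ m → ∀ a b : ℝ, 0 ≤ a → a < b → b ≤ 1 →
            ∀ x ∈ Set.Ico (0:ℝ) 1,
              |∑ k ∈ Finset.Ioc (2 ^ (m - 1)) (2 ^ m),
                  (∫ t in Set.Ioo a b, φ k t) * φ k x| ≤
                C * ((1 + 2 ^ m * |x - a|) ^ (-δ) + (1 + 2 ^ m * |x - b|) ^ (-δ)) := by
  refine ⟨2 ^ δ * c ^ 2 / δ * (2 * (2 ^ (1 + δ) / δ)), by positivity, ?_⟩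
  rintro α - - φ ⟨hmeas, -, hmean, hdecay, -⟩ m hm a b ha - hb x hx
  set S := Finset.Ioc (2 ^ (m - 1)) (2 ^ m)
  set X : ℝ → ℕ → ℝ := fun y k => xi δ (2 ^ m * (y - tpt m k))
  set U := xiTail δ (2 ^ m * (x - a))
  set V := xiTail δ (2 ^ m * (x - b))
  have hterm : ∀ k ∈ S, |(∫ t in Ioo a b, φ k t) * φ k x| ≤
      2 ^ δ * c ^ 2 / δ * (U * (X x k + X a k) + V * (X x k + X b k)) := fun k hk =>
    hdecay.abs_setIntegral_mul_le hδ0 hc.le hm hk (hmeas k)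
      (hmean k (Nat.one_le_of_lt (Finset.mem_Ioc.1 hk).1)) ha hb (Ico_subset_Icc_self hx)
  have hsum : ∀ y, ∑ k ∈ S, X y k ≤ 2 ^ (1 + δ) / δ := sum_xi_tpt_le hδ0 m
  have hU : 0 ≤ U := xiTail_nonneg _ _
  have hV : 0 ≤ V := xiTail_nonneg _ _
  calc _ ≤ ∑ k ∈ S, |(∫ t in Ioo a b, φ k t) * φ k x| := Finset.abs_sum_le_sum_abs _ _
    _ ≤ _ := Finset.sum_le_sum hterm
    _ = 2 ^ δ * c ^ 2 / δ *
        (U * (∑ k ∈ S, X x k + ∑ k ∈ S, X a k) + V * (∑ k ∈ S, X x k + ∑ k ∈ S, X b k)) := by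
        simp only [Finset.mul_sum, Finset.sum_add_distrib, mul_add]
    _ ≤ 2 ^ δ * c ^ 2 / δ * (U * (2 * (2 ^ (1 + δ) / δ)) + V * (2 * (2 ^ (1 + δ) / δ))) := by
        gcongr <;> linarith [hsum x, hsum a, hsum b]
    _ = _ := by
        simp only [U, V, xiTail, abs_mul, abs_of_pos (by positivity : (0 : ℝ) < 2 ^ m)]
        ring

/-- Decay estimate for a wavelet block applied to an indicator of an interval. -/
theorem stmt6 (δ c : ℝ) (hδ0 : 0 < δ) (hδ1 : δ < 1) (hc : 0 < c) :
    ∃ C : ℝ, 0 < C ∧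
      ∀ α : ℝ, 0 < α → α ≤ 1 →
        ∀ φ : ℕ → ℝ → ℝ, IsWaveletSystem δ α c φ →
          ∀ m : ℕ, 1 ≤ m → ∀ a b : ℝ, 0 ≤ a → a < b → b ≤ 1 →
            ∀ x ∈ Set.Ico (0:ℝ) 1,
              |∑ k ∈ Finset.Ioc (2 ^ (m - 1)) (2 ^ m),
                  (∫ t in Set.Ioo a b, φ k t) * φ k x| ≤
                C * ((1 + 2 ^ m * |x - a|) ^ (-δ) + (1 + 2 ^ m * |x - b|) ^ (-δ)) :=
  stmt6_general δ c hδ0 hc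
end
end
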